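/- arXiv:1303.5213 — 4 statements merged into one kernel-verified Lean document; each statement's English description precedes it below -/
import Mathlib

section
/- Let G be an Apollonian network (a plane triangulation obtained from a triangle by iteratively subdividing faces) and let a triangle Δ of G be subdivided twice in the standard way, producing nine sub-triangles whose boundaries involve exactly 7 vertices v1,...,v7. Then no simple path in G contains interior vertices from all nine of these sub-triangles; any simple path meets the interiors of at most eight of them. -/
open Classical in
private lemma aux_metSet {V : Type*} (G : SimpleGraph V) (S : Finset V)
    (I : Fin 9 → Set V)
    (hdisj : ∀ i j : Fin 9, i ≠ j → Disjoint (I i) (I j))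
    (hIS : ∀ i : Fin 9, ∀ v ∈ I i, v ∉ S)
    (hbound : ∀ i : Fin 9, ∀ u ∈ I i, ∀ v : V, G.Adj u v → v ∈ I i ∨ v ∈ S) :
    ∀ {a b : V} (p : G.Walk a b),
      (Finset.univ.filter fun i => ∃ w ∈ p.support, w ∈ I i).card ≤
        (p.support.filter (· ∈ S)).length + (if a ∈ S then 0 else 1) := by
  intro a b p
  induction p with
  | @nil u =>
    by_cases huS : u ∈ S
    · have hempty : (Finset.univ.filter fun i : Fin 9 => ∃ w ∈ (SimpleGraph.Walk.nil :
          G.Walk u u).support, w ∈ I i) = ∅ := by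
        ext i
        simp only [Finset.mem_filter, Finset.mem_univ, true_and, Finset.notMem_empty,
          iff_false, SimpleGraph.Walk.support_nil, List.mem_singleton]
        rintro ⟨w, rfl, hw⟩
        exact hIS i w hw huS
      rw [hempty]
      simp
    · have h1 : (Finset.univ.filter fun i : Fin 9 => ∃ w ∈ (SimpleGraph.Walk.nil :
          G.Walk u u).support, w ∈ I i).card ≤ 1 := by
        apply Finset.card_le_one.mpr
        intro i hi j hj
        simp only [Finset.mem_filter, Finset.mem_univ, true_and,
          SimpleGraph.Walk.support_nil, List.mem_singleton] at hi hj
        obtain ⟨w, rfl, hw⟩ := hi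
        obtain ⟨w', hw', hw2⟩ := hj
        subst hw'
        by_contra hne
        exact Set.disjoint_left.mp (hdisj i j hne) hw hw2
      rw [if_neg huS]
      omega
  | @cons u v c h q ih =>
    have hlen : (((SimpleGraph.Walk.cons h q).support).filter (· ∈ S)).length =
        (q.support.filter (· ∈ S)).length + (if u ∈ S then 1 else 0) := by
      by_cases huS : u ∈ S <;>
        simp [SimpleGraph.Walk.support_cons, List.filter_cons, huS]
    have hmem_iff : ∀ i : Fin 9,
        (∃ w ∈ (SimpleGraph.Walk.cons h q).support, w ∈ I i) ↔
          (u ∈ I i ∨ ∃ w ∈ q.support, w ∈ I i) := by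
      intro i
      simp only [SimpleGraph.Walk.support_cons, List.mem_cons]
      constructor
      · rintro ⟨w, hw | hw, hwI⟩
        · exact Or.inl (hw ▸ hwI)
        · exact Or.inr ⟨w, hw, hwI⟩
      · rintro (hu | ⟨w, hw, hwI⟩)
        · exact ⟨u, Or.inl rfl, hu⟩
        · exact ⟨w, Or.inr hw, hwI⟩
    rw [hlen]
    by_cases huS : u ∈ S
    · -- head in S: it is in no interior
      have hset : (Finset.univ.filter fun i : Fin 9 =>
          ∃ w ∈ (SimpleGraph.Walk.cons h q).support, w ∈ I i)
          = Finset.univ.filter fun i : Fin 9 => ∃ w ∈ q.support, w ∈ I i := by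
        apply Finset.filter_congr
        intro i _
        rw [hmem_iff i]
        constructor
        · rintro (hu | hq)
          · exact absurd huS (hIS i u hu)
          · exact hq
        · exact Or.inr
      rw [hset, if_pos huS, if_pos huS]
      have := ih
      split at this <;> omega
    · by_cases huI : ∃ i, u ∈ I i
      · obtain ⟨i0, hi0⟩ := huI
        have hsub : (Finset.univ.filter fun i : Fin 9 =>
            ∃ w ∈ (SimpleGraph.Walk.cons h q).support, w ∈ I i)
            ⊆ insert i0 (Finset.univ.filter fun i : Fin 9 => ∃ w ∈ q.support, w ∈ I i) := by
          intro i hi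
          simp only [Finset.mem_filter, Finset.mem_univ, true_and] at hi
          rw [hmem_iff i] at hi
          rcases hi with hu | ⟨w, hw, hwI⟩
          · by_cases hii : i = i0
            · subst hii; exact Finset.mem_insert_self _ _
            · exact absurd hi0 (Set.disjoint_left.mp (hdisj i i0 hii) hu)
          · exact Finset.mem_insert_of_mem (by
              simp only [Finset.mem_filter, Finset.mem_univ, true_and]
              exact ⟨w, hw, hwI⟩)
        have hcard := Finset.card_le_card hsub
        rw [if_neg huS, if_neg huS]
        rcases hbound i0 u hi0 v h with hvI | hvS
        · -- v ∈ I i0, so i0 already met by q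
          have hmem : i0 ∈ Finset.univ.filter fun i : Fin 9 => ∃ w ∈ q.support, w ∈ I i := by
            simp only [Finset.mem_filter, Finset.mem_univ, true_and]
            exact ⟨v, q.start_mem_support, hvI⟩
          rw [Finset.insert_eq_self.mpr hmem] at hcard
          have hvnS : v ∉ S := hIS i0 v hvI
          rw [if_neg hvnS] at ih
          omega
        · -- v ∈ S
          have h2 := Finset.card_insert_le i0
            (Finset.univ.filter fun i : Fin 9 => ∃ w ∈ q.support, w ∈ I i)
          rw [if_pos hvS] at ih
          omega
      · -- u in no interior
        push_neg at huI
        have hset : (Finset.univ.filter fun i : Fin 9 =>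
            ∃ w ∈ (SimpleGraph.Walk.cons h q).support, w ∈ I i)
            = Finset.univ.filter fun i : Fin 9 => ∃ w ∈ q.support, w ∈ I i := by
          apply Finset.filter_congr
          intro i _
          rw [hmem_iff i]
          constructor
          · rintro (hu | hq)
            · exact absurd hu (huI i)
            · exact hq
          · exact Or.inr
        rw [hset, if_neg huS, if_neg huS]
        have := ih
        split at this <;> omega

/-- A simple path in a graph cannot meet the interiors of all nine sub-triangles of a
standard 2-subdivision: the interiors `I i` are pairwise disjoint, disjoint from the
set `S` of the 7 boundary vertices, and every edge leaving an interior goes to `S`. -/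
theorem no_path_meets_all_nine_interiors {V : Type*} (G : SimpleGraph V)
    (S : Finset V) (hS : S.card = 7)
    (I : Fin 9 → Set V)
    (hdisj : ∀ i j : Fin 9, i ≠ j → Disjoint (I i) (I j))
    (hIS : ∀ i : Fin 9, ∀ v ∈ I i, v ∉ S)
    (hbound : ∀ i : Fin 9, ∀ u ∈ I i, ∀ v : V, G.Adj u v → v ∈ I i ∨ v ∈ S) :
    ∀ (a b : V) (p : G.Walk a b), p.IsPath → ∃ i : Fin 9, ∀ w ∈ p.support, w ∉ I i := by
  classical
  intro a b p hp
  by_contra hcon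
  push_neg at hcon
  have hall : (Finset.univ.filter fun i : Fin 9 => ∃ w ∈ p.support, w ∈ I i) = Finset.univ := by
    ext i
    simp only [Finset.mem_filter, Finset.mem_univ, true_and, iff_true]
    exact hcon i
  have hmain := aux_metSet G S I hdisj hIS hbound p
  rw [hall] at hmain
  simp only [Finset.card_univ, Fintype.card_fin] at hmain
  -- bound the number of S-vertices on the path
  have hnodup : (p.support.filter (· ∈ S)).Nodup := hp.support_nodup.filter _
  have hsubS : (p.support.filter (· ∈ S)).toFinset ⊆ S := by
    intro x hx
    rw [List.mem_toFinset, List.mem_filter] at hx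
    exact decide_eq_true_eq.mp hx.2
  have hlen : (p.support.filter (· ∈ S)).length ≤ 7 := by
    have := Finset.card_le_card hsubS
    rwa [List.toFinset_card_of_nodup hnodup, hS] at this
  split at hmain <;> omega
end

section
/- For every positive integer m, every Apollonian network with m bounded faces contains a simple path on at least m^{log 2 / log 3} + 2 vertices. -/
/-- `Apollonian n F` : `F` is the set of (bounded) faces, each a 3-element set of
vertex labels `0, ..., n-1`, of an Apollonian network on `n` vertices, built from the
triangle `{0,1,2}` by repeatedly subdividing a face with a fresh vertex. -/
inductive Apollonian : ℕ → Finset (Finset ℕ) → Prop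
  | base : Apollonian 3 {({0, 1, 2} : Finset ℕ)}
  | step {n : ℕ} {F : Finset (Finset ℕ)} (t : Finset ℕ) (ht : t ∈ F)
      (h : Apollonian n F) :
      Apollonian (n + 1) ((F.erase t) ∪ t.image (fun v => insert n (t.erase v)))

/-- The graph of an Apollonian network: two distinct vertices are adjacent iff they lie
on a common face. -/
def apGraph (F : Finset (Finset ℕ)) : SimpleGraph ℕ where
  Adj u v := u ≠ v ∧ ∃ f ∈ F, u ∈ f ∧ v ∈ f
  symm := by
    constructor
    rintro u v ⟨h, f, hf, hu, hv⟩
    exact ⟨h.symm, f, hf, hv, hu⟩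
  loopless := by
    constructor
    rintro u ⟨h, -⟩
    exact h rfl


/-!
Describe an Apollonian network top-down: the first vertex `v` inserted into the outer triangle
`t` splits it into three Apollonian networks, the one opposite to `u ∈ t` having outer triangle
`{v} ∪ t \ {u}`, and these pieces meet only in `v` and `t`. By induction on this description,
any two outer vertices `x, y` are joined by a path that avoids the third outer vertex and has at
least `|F| ^ ξ + 1` vertices, `ξ = log 2 / log 3`: discard the piece with the fewest faces and
concatenate at `v` a path from `x` to `v` and one from `v` to `y` in the other two pieces. The
count closes because `(a + b + c) ^ ξ ≤ a ^ ξ + b ^ ξ` for `c ≤ a, b`, by concavity of `x ↦ x ^ ξ`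
and `3 ^ ξ = 2`. Appending the edge from `y` to the third outer vertex gives one more vertex.
-/

open Finset

section Exponent

variable {p : ℝ}

lemma rpow_add_two_mul_le_add_rpow (hp₀ : 0 ≤ p) (hp₁ : p ≤ 1) (hp : (3 : ℝ) ^ p ≤ 2) {a b : ℝ}
    (hb : 0 ≤ b) (hba : b ≤ a) : (a + 2 * b) ^ p ≤ a ^ p + b ^ p := by
  rcases hb.eq_or_lt with rfl | hb
  · simp [Real.rpow_nonneg]
  set s := a + 2 * b
  have hs : 0 < s := by linarith
  -- `a` and `b` are the points of parameter `θ` on the segments `[s, s / 3]` and `[0, s / 3]`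
  set θ := 3 * b / s with hθ_def
  have hθ₀ : 0 ≤ θ := by positivity
  have hθ₁ : θ ≤ 1 := by rw [div_le_one hs]; linarith
  have hconc := Real.concaveOn_rpow hp₀ hp₁
  have h₁ : (1 - θ) * s ^ p + θ * (s / 3) ^ p ≤ a ^ p := by
    have := hconc.2 (Set.mem_Ici.2 hs.le) (Set.mem_Ici.2 (by positivity : (0:ℝ) ≤ s / 3))
      (sub_nonneg.2 hθ₁) hθ₀ (by ring)
    have ha : (1 - θ) * s + θ * (s / 3) = a := by
      rw [hθ_def]
      field_simp
      ring
    simpa only [smul_eq_mul, ha] using this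
  have h₂ : θ * (s / 3) ^ p ≤ b ^ p := by
    have := hconc.2 (Set.mem_Ici.2 (by positivity : (0:ℝ) ≤ s / 3)) (Set.mem_Ici.2 le_rfl)
      hθ₀ (sub_nonneg.2 hθ₁) (by ring)
    have h0 : (0:ℝ) ≤ (1 - θ) * (0:ℝ) ^ p :=
      mul_nonneg (sub_nonneg.2 hθ₁) (Real.rpow_nonneg le_rfl p)
    have hb' : θ * (s / 3) + (1 - θ) * 0 = b := by
      rw [hθ_def]
      field_simp
      ring
    simp only [smul_eq_mul, hb'] at this
    linarith
  have h₃ : s ^ p ≤ 2 * (s / 3) ^ p := by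
    rw [Real.div_rpow hs.le (by norm_num), mul_div_assoc', le_div_iff₀ (by positivity)]
    nlinarith [Real.rpow_nonneg hs.le p]
  nlinarith [mul_le_mul_of_nonneg_left h₃ hθ₀]

lemma rpow_add_add_le_add_rpow (hp₀ : 0 ≤ p) (hp₁ : p ≤ 1) (hp : (3 : ℝ) ^ p ≤ 2) {a b c : ℝ}
    (hc : 0 ≤ c) (hca : c ≤ a) (hcb : c ≤ b) : (a + b + c) ^ p ≤ a ^ p + b ^ p := by
  wlog hba : b ≤ a generalizing a b
  · rw [add_comm a b, add_comm (a ^ p)]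
    exact this hcb hca (le_of_not_ge hba)
  calc (a + b + c) ^ p ≤ (a + 2 * b) ^ p :=
        Real.rpow_le_rpow (by linarith) (by linarith) hp₀
    _ ≤ a ^ p + b ^ p := rpow_add_two_mul_le_add_rpow hp₀ hp₁ hp (hc.trans hcb) hba

lemma rpow_card_biUnion_le {α β : Type*} [DecidableEq α] [DecidableEq β] (hp₀ : 0 ≤ p)
    (hp₁ : p ≤ 1) (hp : (3 : ℝ) ^ p ≤ 2) {F : α → Finset β} {u₁ u₂ w : α}
    (h₁ : #(F w) ≤ #(F u₁)) (h₂ : #(F w) ≤ #(F u₂)) :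
    (#(({u₁, u₂, w} : Finset α).biUnion F) : ℝ) ^ p ≤ (#(F u₁) : ℝ) ^ p + (#(F u₂) : ℝ) ^ p := by
  have hcard : #(({u₁, u₂, w} : Finset α).biUnion F) ≤ #(F u₁) + #(F u₂) + #(F w) := by
    rw [biUnion_insert, biUnion_insert, singleton_biUnion]
    linarith [card_union_le (F u₁) (F u₂ ∪ F w), card_union_le (F u₂) (F w)]
  calc (#(({u₁, u₂, w} : Finset α).biUnion F) : ℝ) ^ p
      ≤ ((#(F u₁) + #(F u₂) + #(F w) : ℕ) : ℝ) ^ p :=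
        Real.rpow_le_rpow (Nat.cast_nonneg _) (Nat.cast_le.2 hcard) hp₀
    _ ≤ (#(F u₁) : ℝ) ^ p + (#(F u₂) : ℝ) ^ p := by
        push_cast
        exact rpow_add_add_le_add_rpow hp₀ hp₁ hp (Nat.cast_nonneg _) (Nat.cast_le.2 h₁)
          (Nat.cast_le.2 h₂)

end Exponent

lemma three_rpow_log_two_div_log_three : (3 : ℝ) ^ (Real.log 2 / Real.log 3) = 2 :=
  Real.rpow_logb (by norm_num) (by norm_num) (by norm_num)

lemma log_two_div_log_three_le_one : Real.log 2 / Real.log 3 ≤ 1 :=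
  (div_le_one (Real.log_pos (by norm_num))).2 (Real.log_le_log (by norm_num) (by norm_num))

lemma Finset.biUnion_update {ι β : Type*} [DecidableEq ι] [DecidableEq β] {t : Finset ι} {i : ι}
    (hi : i ∈ t) (f : ι → Finset β) (X : Finset β) :
    t.biUnion (Function.update f i X) = X ∪ (t.erase i).biUnion f := by
  conv_lhs => rw [← insert_erase hi]
  rw [biUnion_insert, Function.update_self]
  congr 1
  exact biUnion_congr rfl fun j hj => Function.update_of_ne (ne_of_mem_erase hj) _ _

lemma Finset.exists_eq_insert_insert_of_card_eq_three {α : Type*} [DecidableEq α] {t : Finset α}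
    (ht : #t = 3) {x y w : α} (hx : x ∈ t) (hy : y ∈ t) (hw : w ∈ t) (hxy : x ≠ y) :
    ∃ u₁ u₂, t = {u₁, u₂, w} ∧ u₁ ≠ u₂ ∧ u₁ ≠ x ∧ u₂ ≠ y := by
  obtain ⟨z, hz, hzxy⟩ := exists_mem_notMem_of_card_lt_card
    ((card_le_two : #({x, y} : Finset α) ≤ 2).trans_lt (by omega : 2 < #t))
  simp only [mem_insert, mem_singleton, not_or] at hzxy
  have htxyz : t = {x, y, z} := (eq_of_subset_of_card_le
    (by simp [insert_subset_iff, hx, hy, hz])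
    (by rw [ht, card_eq_three.2 ⟨x, y, z, hxy, Ne.symm hzxy.1, Ne.symm hzxy.2, rfl⟩])).symm
  subst htxyz
  simp only [mem_insert, mem_singleton] at hw
  rcases hw with rfl | rfl | rfl
  · exact ⟨y, z, by ext; simp; tauto, Ne.symm hzxy.2, hxy.symm, hzxy.2⟩
  · exact ⟨z, x, by ext; simp; tauto, hzxy.1, hzxy.1, hxy⟩
  · exact ⟨y, x, by ext; simp; tauto, hxy.symm, hxy.symm, hxy⟩

theorem SimpleGraph.Walk.IsPath.append {α : Type*} {G : SimpleGraph α} {x v y : α}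
    {p : G.Walk x v} {q : G.Walk v y} (hp : p.IsPath) (hq : q.IsPath)
    (hpq : ∀ a ∈ p.support, a ∈ q.support → a = v) : (p.append q).IsPath := by
  have hq' := hq.support_nodup
  rw [← cons_tail_support q, List.nodup_cons] at hq'
  rw [isPath_def, support_append, List.nodup_append]
  refine ⟨hp.support_nodup, hq'.2, fun a ha b hb hab => ?_⟩
  subst hab
  have := hpq a ha ((cons_tail_support q).symm ▸ List.mem_cons_of_mem v hb)
  exact hq'.1 (this ▸ hb)

section Network

variable {α : Type*} [DecidableEq α]

def subdivideFace (F : Finset (Finset α)) (s : Finset α) (w : α) : Finset (Finset α) :=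
  F.erase s ∪ s.image fun u => insert w (s.erase u)

lemma subdivideFace_union_of_notMem {G R : Finset (Finset α)} {s : Finset α} (w : α) (hs : s ∉ R) :
    subdivideFace (G ∪ R) s w = subdivideFace G s w ∪ R := by
  rw [subdivideFace, subdivideFace, erase_union_distrib, erase_eq_of_notMem hs, union_right_comm]

/-- `ApollonianNet t V F`: an Apollonian network with outer triangle `t`, vertex set `V` and set
of faces `F`, described by its first subdivision. `V u` and `F u` belong to the piece opposite to
`u ∈ t`, whose outer triangle is `insert v (t.erase u)`. -/
inductive ApollonianNet : Finset α → Finset α → Finset (Finset α) → Prop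
  | triangle {t : Finset α} (ht : #t = 3) : ApollonianNet t t {t}
  | split {t : Finset α} (v : α) (V : α → Finset α) (F : α → Finset (Finset α))
      (ht : #t = 3) (hv : v ∉ t)
      (hpiece : ∀ u ∈ t, ApollonianNet (insert v (t.erase u)) (V u) (F u))
      (hopp : ∀ u ∈ t, u ∉ V u)
      (hmeet : ∀ u ∈ t, ∀ u' ∈ t, u ≠ u' → V u ∩ V u' ⊆ insert v t) :
      ApollonianNet t (t.biUnion V) (t.biUnion F)

namespace ApollonianNet

variable {t V : Finset α} {F : Finset (Finset α)}

lemma subset (h : ApollonianNet t V F) : t ⊆ V := by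
  induction h with
  | triangle => exact Subset.rfl
  | @split t v V F ht hv hpiece hopp hmeet ih =>
    intro x hx
    obtain ⟨u, hu, hux⟩ := exists_mem_ne (by omega : 1 < #t) x
    exact mem_biUnion.2 ⟨u, hu, ih u hu (mem_insert_of_mem (mem_erase.2 ⟨hux.symm, hx⟩))⟩

lemma subset_of_mem (h : ApollonianNet t V F) {f : Finset α} (hf : f ∈ F) : f ⊆ V := by
  induction h with
  | triangle => rw [mem_singleton.1 hf]
  | @split t v V F ht hv hpiece hopp hmeet ih =>
    obtain ⟨u, hu, hf⟩ := mem_biUnion.1 hf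
    exact (ih u hu hf).trans (subset_biUnion_of_mem V hu)

lemma card_of_mem (h : ApollonianNet t V F) {f : Finset α} (hf : f ∈ F) : #f = 3 := by
  induction h with
  | triangle ht => rwa [mem_singleton.1 hf]
  | @split t v V F ht hv hpiece hopp hmeet ih =>
    obtain ⟨u, hu, hf⟩ := mem_biUnion.1 hf
    exact ih u hu hf

lemma exists_mem_faces (h : ApollonianNet t V F) {x y : α} (hx : x ∈ t) (hy : y ∈ t) :
    ∃ f ∈ F, x ∈ f ∧ y ∈ f := by
  induction h with
  | triangle => exact ⟨_, mem_singleton_self _, hx, hy⟩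
  | @split t v V F ht hv hpiece hopp hmeet ih =>
    obtain ⟨u, hu, hxy⟩ := exists_mem_notMem_of_card_lt_card
      ((card_le_two : #{x, y} ≤ 2).trans_lt (by omega : 2 < #t))
    simp only [mem_insert, mem_singleton, not_or] at hxy
    obtain ⟨f, hf, hxf, hyf⟩ := ih u hu (mem_insert_of_mem (mem_erase.2 ⟨Ne.symm hxy.1, hx⟩))
      (mem_insert_of_mem (mem_erase.2 ⟨Ne.symm hxy.2, hy⟩))
    exact ⟨f, mem_biUnion.2 ⟨u, hu, hf⟩, hxf, hyf⟩

lemma triangle_subdivide (ht : #t = 3) {w : α} (hw : w ∉ t) :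
    ApollonianNet t (insert w t) (subdivideFace {t} t w) := by
  have hV : t.biUnion (fun u => insert w (t.erase u)) = insert w t := by
    ext a
    simp only [mem_biUnion, mem_insert, mem_erase]
    constructor
    · rintro ⟨u, -, rfl | ⟨-, ha⟩⟩ <;> tauto
    · rintro (rfl | ha)
      · obtain ⟨u, hu⟩ := card_pos.1 (by omega : 0 < #t)
        exact ⟨u, hu, .inl rfl⟩
      · obtain ⟨u, hu, hua⟩ := exists_mem_ne (by omega : 1 < #t) a
        exact ⟨u, hu, .inr ⟨hua.symm, ha⟩⟩
  have hF : t.biUnion (fun u => {insert w (t.erase u)}) = subdivideFace {t} t w := by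
    rw [biUnion_singleton, subdivideFace, erase_singleton, empty_union]
  rw [← hV, ← hF]
  refine .split w _ _ ht hw (fun u hu => .triangle ?_) (fun u hu => ?_) (fun u _ u' _ _ => ?_)
  · rw [card_insert_of_notMem (fun h => hw (mem_of_mem_erase h)), card_erase_of_mem hu, ht]
  · simp only [mem_insert, mem_erase, ne_eq, not_true_eq_false, false_and, or_false]
    exact fun h => hw (h ▸ hu)
  · exact inter_subset_left.trans (insert_subset_insert w (erase_subset u t))

lemma notMem_faces_of_ne {v : α} {V : α → Finset α} {F : α → Finset (Finset α)} (ht : #t = 3)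
    (hpiece : ∀ u ∈ t, ApollonianNet (insert v (t.erase u)) (V u) (F u))
    (hopp : ∀ u ∈ t, u ∉ V u)
    (hmeet : ∀ u ∈ t, ∀ u' ∈ t, u ≠ u' → V u ∩ V u' ⊆ insert v t)
    {u u' : α} (hu : u ∈ t) (hu' : u' ∈ t) (hne : u ≠ u') {s : Finset α} (hs : s ∈ F u) :
    s ∉ F u' := by
  intro hs'
  have hsub : s ⊆ insert v ((t.erase u).erase u') := by
    intro a ha
    have hau := (hpiece u hu).subset_of_mem hs ha
    have hau' := (hpiece u' hu').subset_of_mem hs' ha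
    have := hmeet u hu u' hu' hne (mem_inter.2 ⟨hau, hau'⟩)
    simp only [mem_insert, mem_erase] at this ⊢
    rcases this with rfl | hat
    · exact .inl rfl
    · exact .inr ⟨fun h => hopp u' hu' (h ▸ hau'), fun h => hopp u hu (h ▸ hau), hat⟩
  have := (card_le_card hsub).trans (card_insert_le _ _)
  rw [(hpiece u hu).card_of_mem hs, card_erase_of_mem (mem_erase.2 ⟨hne.symm, hu'⟩),
    card_erase_of_mem hu, ht] at this
  omega

lemma split_update {v : α} {V : α → Finset α} {F : α → Finset (Finset α)} (ht : #t = 3)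
    (hv : v ∉ t) (hpiece : ∀ u ∈ t, ApollonianNet (insert v (t.erase u)) (V u) (F u))
    (hopp : ∀ u ∈ t, u ∉ V u) (hmeet : ∀ u ∈ t, ∀ u' ∈ t, u ≠ u' → V u ∩ V u' ⊆ insert v t)
    {u₀ w : α} (hu₀ : u₀ ∈ t) {V₀ : Finset α} {F₀ : Finset (Finset α)}
    (hpiece₀ : ApollonianNet (insert v (t.erase u₀)) V₀ F₀) (hopp₀ : u₀ ∉ V₀)
    (hV₀ : V₀ ⊆ insert w (V u₀)) (hw : ∀ u ∈ t, u ≠ u₀ → w ∉ V u) :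
    ApollonianNet t (t.biUnion (Function.update V u₀ V₀))
      (t.biUnion (Function.update F u₀ F₀)) := by
  have hmeet₀ : ∀ u ∈ t, u ≠ u₀ → V₀ ∩ V u ⊆ insert v t := fun u hu hne =>
    calc V₀ ∩ V u ⊆ insert w (V u₀) ∩ V u := inter_subset_inter hV₀ Subset.rfl
      _ = V u₀ ∩ V u := insert_inter_of_notMem (hw u hu hne)
      _ ⊆ insert v t := hmeet u₀ hu₀ u hu (Ne.symm hne)
  refine .split v _ _ ht hv (fun u hu => ?_) (fun u hu => ?_) (fun u hu u' hu' hne => ?_) <;>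
    simp only [Function.update_apply]
  · split_ifs with h
    · exact h ▸ hpiece₀
    · exact hpiece u hu
  · split_ifs with h
    · exact h ▸ hopp₀
    · exact hopp u hu
  · split_ifs with h h'
    · exact absurd (h.trans h'.symm) hne
    · exact hmeet₀ u' hu' h'
    · exact inter_comm V₀ (V u) ▸ hmeet₀ u hu h
    · exact hmeet u hu u' hu' hne

theorem subdivide (h : ApollonianNet t V F) {s : Finset α} (hs : s ∈ F) {w : α} (hw : w ∉ V) :
    ApollonianNet t (insert w V) (subdivideFace F s w) := by
  induction h with
  | triangle ht => rw [mem_singleton.1 hs]; exact triangle_subdivide ht hw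
  | @split t v V F ht hv hpiece hopp hmeet ih =>
    obtain ⟨u₀, hu₀, hs⟩ := mem_biUnion.1 hs
    have hwV : ∀ u ∈ t, w ∉ V u := fun u hu hwu => hw (mem_biUnion.2 ⟨u, hu, hwu⟩)
    have hwt : w ∉ t := fun hwt => hw ((split v V F ht hv hpiece hopp hmeet).subset hwt)
    have hsR : s ∉ (t.erase u₀).biUnion F := fun hsR => by
      obtain ⟨u, hu, hsu⟩ := mem_biUnion.1 hsR
      exact notMem_faces_of_ne ht hpiece hopp hmeet hu₀ (mem_of_mem_erase hu)
        (ne_of_mem_erase hu).symm hs hsu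
    have hV' : t.biUnion (Function.update V u₀ (insert w (V u₀))) = insert w (t.biUnion V) := by
      rw [biUnion_update hu₀, ← Function.update_eq_self u₀ V, biUnion_update hu₀,
        Function.update_eq_self, insert_union]
    have hF' : t.biUnion (Function.update F u₀ (subdivideFace (F u₀) s w)) =
        subdivideFace (t.biUnion F) s w := by
      rw [biUnion_update hu₀, ← Function.update_eq_self u₀ F, biUnion_update hu₀,
        Function.update_eq_self, subdivideFace_union_of_notMem w hsR]
    rw [← hV', ← hF']
    refine split_update ht hv hpiece hopp hmeet hu₀ (ih u₀ hu₀ hs (hwV u₀ hu₀)) ?_ Subset.rfl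
      fun u hu _ => hwV u hu
    rw [mem_insert, not_or]
    exact ⟨fun h => hwt (h ▸ hu₀), hopp u₀ hu₀⟩

end ApollonianNet

end Network

theorem ApollonianNet.of_apollonian {n : ℕ} {F : Finset (Finset ℕ)} (h : Apollonian n F) :
    ApollonianNet {0, 1, 2} (range n) F := by
  induction h with
  | base => exact .triangle rfl
  | step t ht h ih =>
    rw [range_add_one]
    exact ih.subdivide ht (by simp)

lemma apGraph_adj {F : Finset (Finset ℕ)} {f : Finset ℕ} (hf : f ∈ F) {u v : ℕ} (hu : u ∈ f)
    (hv : v ∈ f) (huv : u ≠ v) : (apGraph F).Adj u v :=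
  ⟨huv, f, hf, hu, hv⟩

lemma apGraph_mono {F F' : Finset (Finset ℕ)} (h : F ⊆ F') : apGraph F ≤ apGraph F' :=
  fun _ _ ⟨hne, f, hf, hu, hv⟩ => ⟨hne, f, h hf, hu, hv⟩

def HasLongPath (F : Finset (Finset ℕ)) (V t : Finset ℕ) (ℓ : ℝ) (x y : ℕ) : Prop :=
  ∃ p : (apGraph F).Walk x y, p.IsPath ∧ (∀ a ∈ p.support, a ∈ V ∧ (a ∈ t → a = x ∨ a = y)) ∧
    ℓ ≤ p.support.length

namespace HasLongPath

variable {F F' : Finset (Finset ℕ)} {V V' s t : Finset ℕ} {ℓ ℓ' : ℝ} {x y : ℕ}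

lemma mono (h : HasLongPath F V s ℓ x y) (hF : F ⊆ F') (hV : V ⊆ V') (hts : t ∩ V ⊆ s)
    (hℓ : ℓ' ≤ ℓ) : HasLongPath F' V' t ℓ' x y := by
  obtain ⟨p, hp, hpV, hpℓ⟩ := h
  refine ⟨p.mapLe (apGraph_mono hF), hp.mapLe _, fun a ha => ?_, ?_⟩
  · rw [SimpleGraph.Walk.support_mapLe_eq_support] at ha
    exact ⟨hV (hpV a ha).1, fun hat => (hpV a ha).2 (hts (mem_inter.2 ⟨hat, (hpV a ha).1⟩))⟩
  · rw [SimpleGraph.Walk.support_mapLe_eq_support]; linarith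

lemma append {V₁ V₂ : Finset ℕ} {ℓ₁ ℓ₂ : ℝ} {v : ℕ} (h₁ : HasLongPath F V₁ t ℓ₁ x v)
    (h₂ : HasLongPath F V₂ t ℓ₂ v y) (hmeet : V₁ ∩ V₂ ⊆ insert v t) (hv : v ∉ t) (hxy : x ≠ y) :
    HasLongPath F (V₁ ∪ V₂) t (ℓ₁ + ℓ₂ - 1) x y := by
  obtain ⟨p, hp, hpV, hpℓ⟩ := h₁
  obtain ⟨q, hq, hqV, hqℓ⟩ := h₂
  have hpt : ∀ a ∈ p.support, a ∈ t → a = x := fun a ha hat =>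
    ((hpV a ha).2 hat).resolve_right fun hav => hv (hav ▸ hat)
  have hqt : ∀ a ∈ q.support, a ∈ t → a = y := fun a ha hat =>
    ((hqV a ha).2 hat).resolve_left fun hav => hv (hav ▸ hat)
  refine ⟨p.append q, hp.append hq fun a hap haq => ?_, fun a ha => ?_, ?_⟩
  · rcases mem_insert.1 (hmeet (mem_inter.2 ⟨(hpV a hap).1, (hqV a haq).1⟩)) with hav | hat
    · exact hav
    · exact absurd ((hpt a hap hat).symm.trans (hqt a haq hat)) hxy
  · rcases (SimpleGraph.Walk.mem_support_append_iff p q).1 ha with hap | haq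
    · exact ⟨mem_union_left _ (hpV a hap).1, fun hat => .inl (hpt a hap hat)⟩
    · exact ⟨mem_union_right _ (hqV a haq).1, fun hat => .inr (hqt a haq hat)⟩
  · have := congrArg List.length (SimpleGraph.Walk.support_append p q)
    rw [List.length_append, List.length_tail] at this
    have hq0 : q.support.length ≠ 0 := by simp
    rw [this, Nat.cast_add, Nat.cast_sub (by omega)]
    push_cast
    linarith

end HasLongPath

namespace ApollonianNet

theorem hasLongPath {t V : Finset ℕ} {F : Finset (Finset ℕ)} (h : ApollonianNet t V F) {r : ℝ}
    (hr₀ : 0 ≤ r) (hr₁ : r ≤ 1) (hr : (3 : ℝ) ^ r ≤ 2) {x y : ℕ} (hx : x ∈ t) (hy : y ∈ t)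
    (hxy : x ≠ y) : HasLongPath F V t ((#F : ℝ) ^ r + 1) x y := by
  induction h generalizing x y with
  | triangle =>
    refine ⟨.cons (apGraph_adj (mem_singleton_self _) hx hy hxy) .nil, by simp [hxy], ?_,
      by norm_num⟩
    simp only [SimpleGraph.Walk.support_cons, SimpleGraph.Walk.support_nil, List.mem_cons,
      List.not_mem_nil, or_false]
    rintro a (rfl | rfl) <;> simp [hx, hy]
  | @split t v V F ht hv hpiece hopp hmeet ih =>
    obtain ⟨w, hw, hmin⟩ := t.exists_min_image (fun u => #(F u)) ⟨x, hx⟩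
    obtain ⟨u₁, u₂, htu, hne, hu₁x, hu₂y⟩ :=
      exists_eq_insert_insert_of_card_eq_three ht hx hy hw hxy
    have hu₁ : u₁ ∈ t := htu ▸ mem_insert_self _ _
    have hu₂ : u₂ ∈ t := htu ▸ mem_insert_of_mem (mem_insert_self _ _)
    have hinter : ∀ u ∈ t, t ∩ V u ⊆ insert v (t.erase u) := fun u hu a ha =>
      mem_insert_of_mem (mem_erase.2 ⟨fun hau => hopp u hu (hau ▸ (mem_inter.1 ha).2),
        (mem_inter.1 ha).1⟩)
    have h₁ : HasLongPath (t.biUnion F) (V u₁) t ((#(F u₁) : ℝ) ^ r + 1) x v :=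
      (ih u₁ hu₁ (mem_insert_of_mem (mem_erase.2 ⟨hu₁x.symm, hx⟩)) (mem_insert_self v _)
        fun h => hv (h ▸ hx)).mono (subset_biUnion_of_mem F hu₁) Subset.rfl (hinter u₁ hu₁) le_rfl
    have h₂ : HasLongPath (t.biUnion F) (V u₂) t ((#(F u₂) : ℝ) ^ r + 1) v y :=
      (ih u₂ hu₂ (mem_insert_self v _) (mem_insert_of_mem (mem_erase.2 ⟨hu₂y.symm, hy⟩))
        fun h => hv (h ▸ hy)).mono (subset_biUnion_of_mem F hu₂) Subset.rfl (hinter u₂ hu₂) le_rfl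
    have hcount := rpow_card_biUnion_le hr₀ hr₁ hr (hmin u₁ hu₁) (hmin u₂ hu₂)
    rw [← htu] at hcount
    exact (h₁.append h₂ (hmeet u₁ hu₁ u₂ hu₂ hne) hv hxy).mono Subset.rfl
      (union_subset (subset_biUnion_of_mem V hu₁) (subset_biUnion_of_mem V hu₂))
      inter_subset_left (by linarith)

end ApollonianNet

theorem apollonian_long_path_general (m n : ℕ) (F : Finset (Finset ℕ))
    (hA : Apollonian n F) (hF : F.card = m) :
    ∃ (u v : ℕ) (p : (apGraph F).Walk u v), p.IsPath ∧
      (m : ℝ) ^ (Real.log 2 / Real.log 3) + 2 ≤ p.support.length := by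
  have hnet := ApollonianNet.of_apollonian hA
  obtain ⟨p, hp, hpt, hpℓ⟩ := hnet.hasLongPath
    (div_nonneg (Real.log_nonneg one_le_two) (Real.log_nonneg (by norm_num)))
    log_two_div_log_three_le_one three_rpow_log_two_div_log_three.le
    (x := 0) (y := 1) (by simp) (by simp) zero_ne_one
  obtain ⟨f, hf, h1f, h2f⟩ := hnet.exists_mem_faces (x := 1) (y := 2) (by simp) (by simp)
  have h2p : 2 ∉ p.support := fun h => by simpa using (hpt 2 h).2 (by simp)
  refine ⟨0, 2, p.concat (apGraph_adj hf h1f h2f (by norm_num)), hp.concat h2p _, ?_⟩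
  rw [SimpleGraph.Walk.support_concat, List.length_append, List.length_singleton, Nat.cast_succ,
    ← hF]
  linarith

/-- Every Apollonian network with `m` faces contains a simple path on at least
`m^(log 2 / log 3) + 2` vertices. -/
theorem apollonian_long_path (m n : ℕ) (hm : 0 < m) (F : Finset (Finset ℕ))
    (hA : Apollonian n F) (hF : F.card = m) :
    ∃ (u v : ℕ) (p : (apGraph F).Walk u v), p.IsPath ∧
      (m : ℝ) ^ (Real.log 2 / Real.log 3) + 2 ≤ p.support.length :=
  apollonian_long_path_general m n F hA hF
end

section
/- Let ξ = log 2 / log 3. If a, b, c are nonnegative reals with a ≥ b ≥ c and a + b + c = m, then a^ξ + b^ξ ≥ m^ξ. -/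
/-!
Since `3 ^ ξ = 2` and `x ↦ x ^ ξ` is concave and monotone on `[0, ∞)`, it suffices to compare
increments: adding `2b` to `a ≥ b` gains at most as much as adding `2b` to `b`, that is
`(a + 2b) ^ ξ - a ^ ξ ≤ (3b) ^ ξ - b ^ ξ = b ^ ξ`, and `m ≤ a + 2b`.
-/

open Real

theorem ConcaveOn.map_add_sub_map_le_of_le {s : Set ℝ} {f : ℝ → ℝ} (hf : ConcaveOn ℝ s f)
    {x y d : ℝ} (hx : x ∈ s) (hyd : y + d ∈ s) (hxy : x ≤ y) (hd : 0 ≤ d) :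
    f (y + d) - f y ≤ f (x + d) - f x := by
  rcases hd.eq_or_lt with rfl | hd
  · simp
  have ht : 0 < y + d - x := by linarith
  -- `x + d` and `y` are the two convex combinations of `x` and `y + d` with swapped weights
  have hα : 0 ≤ (y - x) / (y + d - x) := div_nonneg (by linarith) ht.le
  have hβ : 0 ≤ d / (y + d - x) := div_nonneg hd.le ht.le
  have hαβ : (y - x) / (y + d - x) + d / (y + d - x) = 1 := by field_simp; ring
  have hxd := hf.2 hx hyd hα hβ hαβ
  have hy := hf.2 hx hyd hβ hα (by rw [add_comm, hαβ])
  simp only [smul_eq_mul] at hxd hy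
  have exd : (y - x) / (y + d - x) * x + d / (y + d - x) * (y + d) = x + d := by
    field_simp; ring
  have ey : d / (y + d - x) * x + (y - x) / (y + d - x) * (y + d) = y := by
    field_simp; ring
  rw [exd] at hxd
  rw [ey] at hy
  linear_combination hxd + hy - (f x + f (y + d)) * hαβ

/-- If `a ≥ b ≥ c ≥ 0` and `a + b + c = m`, then `a^ξ + b^ξ ≥ m^ξ` with
`ξ = log 2 / log 3`. -/
theorem rpow_logtwo_logthree_ineq (a b c m : ℝ) (hc : 0 ≤ c) (hcb : c ≤ b) (hba : b ≤ a)
    (hm : a + b + c = m) :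
    m ^ (Real.log 2 / Real.log 3) ≤
      a ^ (Real.log 2 / Real.log 3) + b ^ (Real.log 2 / Real.log 3) := by
  set ξ := log 2 / log 3 with hξ
  have hb : 0 ≤ b := hc.trans hcb
  have hξ0 : 0 ≤ ξ := div_nonneg (log_nonneg (by norm_num)) (log_nonneg (by norm_num))
  have hξ1 : ξ ≤ 1 := div_le_one_of_le₀ (log_le_log (by norm_num) (by norm_num))
    (log_nonneg (by norm_num))
  have h3 : (3 : ℝ) ^ ξ = 2 := by rw [hξ, ← logb, rpow_logb] <;> norm_num
  have hincr : (a + 2 * b) ^ ξ - a ^ ξ ≤ (b + 2 * b) ^ ξ - b ^ ξ :=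
    (concaveOn_rpow hξ0 hξ1).map_add_sub_map_le_of_le hb (Set.mem_Ici.mpr (by linarith))
      hba (by linarith)
  have h3b : (b + 2 * b) ^ ξ = 2 * b ^ ξ := by
    rw [show b + 2 * b = 3 * b by ring, mul_rpow (by norm_num) hb, h3]
  have hmono : m ^ ξ ≤ (a + 2 * b) ^ ξ := rpow_le_rpow (by linarith) (by linarith) hξ0
  linarith
end

section
/- Let h(x) = 12x³/(1 − 2x) − 6x³/(1 − x) and define Wh(x) = x(x−1)h'(x)/h(x) − log h(x) for x ∈ [0.1, 0.2]. Then Wh has a unique root x̂ in the open interval (0.1, 0.2). -/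
noncomputable def hfun (x : ℝ) : ℝ := 12 * x^3 / (1 - 2*x) - 6 * x^3 / (1 - x)

noncomputable def Wh (x : ℝ) : ℝ :=
  x * (x - 1) * deriv hfun x / hfun x - Real.log (hfun x)

/-!
On `(0, 1/2)` we have `hfun x = 6x³ / ((1 - 2x)(1 - x)) > 0`, whose logarithmic derivative is
`3/x + 2/(1 - 2x) + 1/(1 - x)`. So the first term of `Wh` is the rational function
`whRational x = 2x - 3 + 2x(x - 1)/(1 - 2x)`, with derivative `4x(x - 1)/(1 - 2x)² < 0`, while
`log ∘ hfun` is strictly increasing: `Wh` is strictly decreasing there. As `hfun 0.1 = 1/120` and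
`hfun 0.2 = 1/10`, we get `Wh 0.1 = log 120 - 121/40 > 0` and `Wh 0.2 = log 10 - 47/15 < 0`, and the
intermediate value theorem gives exactly one root.
-/

open Set Real

theorem ContinuousOn.existsUnique_mem_Ioo_eq_of_strictAntiOn {α δ : Type*}
    [ConditionallyCompleteLinearOrder α] [TopologicalSpace α] [OrderTopology α] [DenselyOrdered α]
    [LinearOrder δ] [TopologicalSpace δ] [OrderClosedTopology δ]
    {f : α → δ} {a b : α} {c : δ} (hab : a ≤ b) (hf : ContinuousOn f (Icc a b))
    (hanti : StrictAntiOn f (Icc a b)) (hb : f b < c) (ha : c < f a) :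
    ∃! x, x ∈ Ioo a b ∧ f x = c := by
  obtain ⟨x, hx, hfx⟩ := intermediate_value_Ioo' hab hf ⟨hb, ha⟩
  refine ⟨x, ⟨hx, hfx⟩, fun y ⟨hy, hfy⟩ => ?_⟩
  exact hanti.injOn (Ioo_subset_Icc_self hy) (Ioo_subset_Icc_self hx) (hfy.trans hfx.symm)

theorem hfun_eq_div {x : ℝ} (h₂ : 1 - 2 * x ≠ 0) (h₁ : 1 - x ≠ 0) :
    hfun x = 6 * x ^ 3 / ((1 - 2 * x) * (1 - x)) := by
  rw [hfun, div_sub_div _ _ h₂ h₁]; ring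

theorem hfun_pos {x : ℝ} (hx : x ∈ Ioo 0 (1 / 2)) : 0 < hfun x := by
  obtain ⟨hx₀, hx₁⟩ := hx
  rw [hfun_eq_div (by linarith) (by linarith)]
  have : 0 < 1 - 2 * x := by linarith
  have : 0 < 1 - x := by linarith
  positivity

theorem hasDerivAt_hfun {x : ℝ} (h₀ : x ≠ 0) (h₂ : 1 - 2 * x ≠ 0) (h₁ : 1 - x ≠ 0) :
    HasDerivAt hfun (hfun x * (3 / x + 2 / (1 - 2 * x) + 1 / (1 - x))) x := by
  have hd₂ : HasDerivAt (fun x : ℝ => 1 - 2 * x) (-2) x := by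
    simpa using ((hasDerivAt_id x).const_mul 2).const_sub 1
  have hd₁ : HasDerivAt (fun x : ℝ => 1 - x) (-1) x := by
    simpa using (hasDerivAt_id x).const_sub 1
  have hcube (c : ℝ) : HasDerivAt (fun x : ℝ => c * x ^ 3) (c * (3 * x ^ 2)) x := by
    simpa using (hasDerivAt_pow 3 x).const_mul c
  refine (((hcube 12).div hd₂ h₂).sub ((hcube 6).div hd₁ h₁)).congr_deriv ?_
  rw [hfun_eq_div h₂ h₁]
  grind [mul_ne_zero h₂ h₁]

noncomputable def whRational (x : ℝ) : ℝ := 2 * x - 3 + 2 * x * (x - 1) / (1 - 2 * x)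

theorem hasDerivAt_whRational {x : ℝ} (h₂ : 1 - 2 * x ≠ 0) :
    HasDerivAt whRational (4 * x * (x - 1) / (1 - 2 * x) ^ 2) x := by
  have hd₂ : HasDerivAt (fun x : ℝ => 1 - 2 * x) (-2) x := by
    simpa using ((hasDerivAt_id x).const_mul 2).const_sub 1
  have hnum : HasDerivAt (fun x : ℝ => 2 * x * (x - 1)) (2 * (x - 1) + 2 * x) x :=
    (((hasDerivAt_id' x).const_mul 2).fun_mul ((hasDerivAt_id' x).sub_const 1)).congr_deriv
      (by ring)
  have hlin : HasDerivAt (fun x : ℝ => 2 * x - 3) 2 x := by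
    simpa using ((hasDerivAt_id x).const_mul 2).sub_const 3
  refine (hlin.add (hnum.div hd₂ h₂)).congr_deriv ?_
  field_simp
  ring

theorem Wh_eq {x : ℝ} (hx : x ∈ Ioo 0 (1 / 2)) : Wh x = whRational x - log (hfun x) := by
  have h₀ : x ≠ 0 := hx.1.ne'
  have h₂ : 1 - 2 * x ≠ 0 := by linarith [hx.2]
  have h₁ : 1 - x ≠ 0 := by linarith [hx.2]
  rw [Wh, (hasDerivAt_hfun h₀ h₂ h₁).deriv, mul_div_assoc, mul_div_cancel_left₀ _ (hfun_pos hx).ne',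
    whRational]
  field_simp
  ring

theorem hasDerivAt_Wh {x : ℝ} (hx : x ∈ Ioo 0 (1 / 2)) :
    HasDerivAt Wh
      (4 * x * (x - 1) / (1 - 2 * x) ^ 2 - (3 / x + 2 / (1 - 2 * x) + 1 / (1 - x))) x := by
  have h₀ : x ≠ 0 := hx.1.ne'
  have h₂ : 1 - 2 * x ≠ 0 := by linarith [hx.2]
  have h₁ : 1 - x ≠ 0 := by linarith [hx.2]
  have hlog := (hasDerivAt_hfun h₀ h₂ h₁).log (hfun_pos hx).ne'
  rw [mul_div_cancel_left₀ _ (hfun_pos hx).ne'] at hlog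
  refine ((hasDerivAt_whRational h₂).sub hlog).congr_of_eventuallyEq ?_
  filter_upwards [isOpen_Ioo.mem_nhds hx] with y hy using Wh_eq hy

theorem Wh_strictAntiOn : StrictAntiOn Wh (Ioo 0 (1 / 2)) := by
  refine strictAntiOn_of_deriv_neg (convex_Ioo 0 (1 / 2))
    (fun x hx => (hasDerivAt_Wh hx).continuousAt.continuousWithinAt) fun x hx => ?_
  rw [interior_Ioo] at hx
  rw [(hasDerivAt_Wh hx).deriv]
  obtain ⟨hx₀, hx₁⟩ := hx
  have : 0 < 1 - 2 * x := by linarith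
  have : 0 < 1 - x := by linarith
  have : 4 * x * (x - 1) / (1 - 2 * x) ^ 2 ≤ 0 :=
    div_nonpos_of_nonpos_of_nonneg (by nlinarith) (by positivity)
  have : 0 < 3 / x + 2 / (1 - 2 * x) + 1 / (1 - x) := by positivity
  linarith

theorem Wh_one_tenth_pos : 0 < Wh 0.1 := by
  have hh : hfun 0.1 = 120⁻¹ := by norm_num [hfun]
  have hlog : 121 / 40 < log 120 := by
    rw [lt_log_iff_exp_lt (by norm_num)]
    calc exp (121 / 40) < exp 1 ^ 4 := by rw [← exp_nat_mul]; exact exp_lt_exp.mpr (by norm_num)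
      _ < 2.7182818286 ^ 4 := by gcongr; exact exp_one_lt_d9
      _ < 120 := by norm_num
  rw [Wh_eq (by norm_num), hh, log_inv, whRational]
  norm_num
  linarith

theorem Wh_one_fifth_neg : Wh 0.2 < 0 := by
  have hh : hfun 0.2 = 10⁻¹ := by norm_num [hfun]
  have hlog : log 10 < 3 := by
    rw [log_lt_iff_lt_exp (by norm_num)]
    calc (10 : ℝ) < 2.7182818283 ^ 3 := by norm_num
      _ < exp 1 ^ 3 := by gcongr; exact exp_one_gt_d9
      _ = exp 3 := by rw [← exp_nat_mul]; norm_num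
  rw [Wh_eq (by norm_num), hh, log_inv, whRational]
  norm_num
  linarith

/-- `Wh` has a unique root in the open interval `(0.1, 0.2)`. -/
theorem Wh_unique_root : ∃! x : ℝ, x ∈ Set.Ioo (0.1 : ℝ) 0.2 ∧ Wh x = 0 := by
  have hsub : Icc (0.1 : ℝ) 0.2 ⊆ Ioo 0 (1 / 2) := Icc_subset_Ioo (by norm_num) (by norm_num)
  have hcont : ContinuousOn Wh (Icc (0.1 : ℝ) 0.2) := fun x hx =>
    (hasDerivAt_Wh (hsub hx)).continuousAt.continuousWithinAt
  exact hcont.existsUnique_mem_Ioo_eq_of_strictAntiOn (by norm_num) (Wh_strictAntiOn.mono hsub)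
    Wh_one_fifth_neg Wh_one_tenth_pos
end
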